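/- Let n ≥ 2 and let S be a set of 2n + 1 distinct points in ℝ^n such that no affine hyperplane of ℝ^n contains more than n points of S. Then for every subset P ⊆ S with |P| ≤ n there exists an affine hyperplane of ℝ^n (the zero set of w·x + b with w ∈ ℝ^n, w ≠ 0, b ∈ ℝ) that contains every point of P and contains no point of S \ P. -/
import Mathlib

noncomputable def dotp {n : ℕ} (w x : Fin n → ℝ) : ℝ := ∑ i, w i * x i

noncomputable def phi {n : ℕ} (x : Fin n → ℝ) : ((Fin n → ℝ) × ℝ) →ₗ[ℝ] ℝ where
  toFun p := dotp p.1 x + p.2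
  map_add' p q := by simp [dotp, add_mul, Finset.sum_add_distrib]; ring
  map_smul' c p := by simp [dotp, mul_add, Finset.mul_sum, mul_assoc]

lemma finrank_M (n : ℕ) : Module.finrank ℝ ((Fin n → ℝ) × ℝ) = n + 1 := by
  simp

lemma finrank_ker_phi {n : ℕ} (x : Fin n → ℝ) :
    n ≤ Module.finrank ℝ (LinearMap.ker (phi x)) := by
  have h := LinearMap.finrank_range_add_finrank_ker (phi x)
  have h2 : Module.finrank ℝ (LinearMap.range (phi x)) ≤ 1 := by
    simpa using Submodule.finrank_le (LinearMap.range (phi x))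
  rw [finrank_M n] at h
  omega

lemma dim_drop {n : ℕ} (W : Submodule ℝ ((Fin n → ℝ) × ℝ)) (R : Finset (Fin n → ℝ)) :
    Module.finrank ℝ W ≤ R.card + Module.finrank ℝ
      ↥(W ⊓ R.inf (fun x => LinearMap.ker (phi x))) := by
  classical
  induction R using Finset.induction with
  | empty => rw [Finset.inf_empty, inf_top_eq]; simp
  | @insert a R ha ih =>
    rw [Finset.inf_insert]
    set X := W ⊓ R.inf (fun x => LinearMap.ker (phi x)) with hX
    have hkey : Module.finrank ℝ X ≤ 1 + Module.finrank ℝ ↥(X ⊓ LinearMap.ker (phi a)) := by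
      have h := Submodule.finrank_sup_add_finrank_inf_eq X (LinearMap.ker (phi a))
      have h1 : Module.finrank ℝ ↥(X ⊔ LinearMap.ker (phi a)) ≤ n + 1 := by
        have := Submodule.finrank_le (X ⊔ LinearMap.ker (phi a))
        rwa [finrank_M n] at this
      have h2 := finrank_ker_phi a
      omega
    have heq : W ⊓ (LinearMap.ker (phi a) ⊓ R.inf (fun x => LinearMap.ker (phi x)))
        = X ⊓ LinearMap.ker (phi a) := by
      rw [hX]; ac_rfl
    rw [heq, Finset.card_insert_of_notMem ha]
    omega
@[simp] lemma phi_apply {n : ℕ} (x : Fin n → ℝ) (p : (Fin n → ℝ) × ℝ) :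
    phi x p = dotp p.1 x + p.2 := rfl

/-- Let `n ≥ 2` and let `S` be a set of `2n + 1` points in ℝⁿ such that no affine
hyperplane contains more than `n` points of `S`.  Then for every subset `P ⊆ S` with
`|P| ≤ n` there is an affine hyperplane containing all points of `P` and no point
of `S \ P`. -/
theorem hyperplane_through_exactly_P (n : ℕ) (hn : 2 ≤ n)
    (S : Finset (Fin n → ℝ)) (hcard : S.card = 2 * n + 1)
    (hgen : ∀ w : Fin n → ℝ, w ≠ 0 → ∀ b : ℝ, ∀ T ⊆ S,
      (∀ x ∈ T, dotp w x + b = 0) → T.card ≤ n) :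
    ∀ P ⊆ S, P.card ≤ n →
      ∃ w : Fin n → ℝ, w ≠ 0 ∧ ∃ b : ℝ,
        (∀ x ∈ P, dotp w x + b = 0) ∧ (∀ x ∈ S, x ∉ P → dotp w x + b ≠ 0) := by
  classical
  intro P hPS hPn
  have hVrank : n + 1 ≤ P.card +
      Module.finrank ℝ ↥(P.inf (fun x => LinearMap.ker (phi x))) := by
    have h := dim_drop (n := n) ⊤ P
    rw [top_inf_eq, finrank_top, finrank_M n] at h
    exact h
  -- no point of S \ P is on every hyperplane through P
  have hker : ∀ y ∈ S \ P,
      ¬ P.inf (fun x => LinearMap.ker (phi x)) ≤ LinearMap.ker (phi y) := by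
    intro y hy hle
    rw [Finset.mem_sdiff] at hy
    have hins : insert y P ⊆ S := Finset.insert_subset hy.1 hPS
    have hcardins : (insert y P).card = P.card + 1 :=
      Finset.card_insert_of_notMem hy.2
    obtain ⟨T, hT1, hT2, hT3⟩ := Finset.exists_subsuperset_card_eq hins
      (by omega : (insert y P).card ≤ n + 1) (by omega : n + 1 ≤ S.card)
    have hVins : (insert y P).inf (fun x => LinearMap.ker (phi x))
        = P.inf (fun x => LinearMap.ker (phi x)) := by
      rw [Finset.inf_insert]
      exact inf_eq_right.mpr hle
    have hTinf : T.inf (fun x => LinearMap.ker (phi x)) =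
        P.inf (fun x => LinearMap.ker (phi x)) ⊓
          (T \ insert y P).inf (fun x => LinearMap.ker (phi x)) := by
      conv_lhs => rw [← Finset.union_sdiff_of_subset hT1]
      rw [Finset.inf_union, hVins]
    have hcardsd : (T \ insert y P).card = n - P.card := by
      rw [Finset.card_sdiff_of_subset hT1]; omega
    have hdrop := dim_drop (n := n) (P.inf (fun x => LinearMap.ker (phi x)))
      (T \ insert y P)
    have hTrank : 1 ≤ Module.finrank ℝ ↥(T.inf (fun x => LinearMap.ker (phi x))) := by
      rw [hTinf]; omega
    have hTne : T.inf (fun x => LinearMap.ker (phi x)) ≠ ⊥ := by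
      intro hbot
      rw [hbot, finrank_bot] at hTrank
      omega
    obtain ⟨v, hvmem, hvne⟩ := Submodule.ne_bot_iff _ |>.mp hTne
    rw [Submodule.mem_finsetInf] at hvmem
    have hzero : ∀ x ∈ T, dotp v.1 x + v.2 = 0 := by
      intro x hx
      have := hvmem x hx
      rwa [LinearMap.mem_ker, phi_apply] at this
    have hw : v.1 ≠ 0 := by
      intro h0
      have hTpos : 0 < T.card := by omega
      obtain ⟨x0, hx0⟩ := Finset.card_pos.mp hTpos
      have hb : v.2 = 0 := by
        have := hzero x0 hx0
        rw [h0] at this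
        simpa [dotp] using this
      exact hvne (Prod.ext h0 hb)
    have := hgen v.1 hw v.2 T hT2 hzero
    omega
  -- the solution space is not contained in {w = 0}
  have hKw : ¬ P.inf (fun x => LinearMap.ker (phi x)) ≤
      LinearMap.ker (LinearMap.fst ℝ (Fin n → ℝ) ℝ) := by
    intro hle
    rcases P.eq_empty_or_nonempty with hP | ⟨x0, hx0⟩
    · rw [hP, Finset.inf_empty] at hle
      have h1 := hle (Submodule.mem_top (x := ((fun _ => (1:ℝ)), (0:ℝ))))
      rw [LinearMap.mem_ker] at h1
      have := congrFun h1 ⟨0, by omega⟩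
      norm_num at this
    · have hbot : P.inf (fun x => LinearMap.ker (phi x)) = ⊥ := by
        rw [eq_bot_iff]
        intro v hv
        have h1 : v.1 = 0 := hle hv
        have h2 : v.2 = 0 := by
          rw [Submodule.mem_finsetInf] at hv
          have := hv x0 hx0
          rw [LinearMap.mem_ker, phi_apply, h1] at this
          simpa [dotp] using this
        rw [Submodule.mem_bot]
        exact Prod.ext h1 h2
      rw [hbot, finrank_bot] at hVrank
      omega
  -- avoid the finitely many proper subspaces
  set V := P.inf (fun x => LinearMap.ker (phi x)) with hVdef
  let q : Option {y // y ∈ S \ P} → Subspace ℝ V := fun i =>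
    Option.elim i
      (Submodule.comap V.subtype (LinearMap.ker (LinearMap.fst ℝ (Fin n → ℝ) ℝ)))
      (fun y => Submodule.comap V.subtype (LinearMap.ker (phi y.1)))
  have hq : ∀ i, q i ≠ ⊤ := by
    intro i
    cases i with
    | none =>
      simpa [q, Submodule.comap_subtype_eq_top] using hKw
    | some y =>
      simpa [q, Submodule.comap_subtype_eq_top] using hker y.1 y.2
  have hcov : ⋃ i, ((q i : Subspace ℝ V) : Set V) ≠ Set.univ := by
    intro h
    obtain ⟨i, hi⟩ := Subspace.exists_eq_top_of_iUnion_eq_univ h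
    exact hq i hi
  obtain ⟨v, hv⟩ := (Set.ne_univ_iff_exists_notMem _).mp hcov
  simp only [Set.mem_iUnion, not_exists] at hv
  refine ⟨(v : (Fin n → ℝ) × ℝ).1, ?_, (v : (Fin n → ℝ) × ℝ).2, ?_, ?_⟩
  · intro h0
    apply hv none
    simp only [q, Option.elim, Submodule.mem_comap, Submodule.subtype_apply,
      LinearMap.mem_ker, LinearMap.fst_apply]
    exact h0
  · intro x hx
    have hvV : (v : (Fin n → ℝ) × ℝ) ∈ P.inf (fun x => LinearMap.ker (phi x)) := v.2
    have := Submodule.mem_finsetInf.mp hvV x hx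
    rwa [LinearMap.mem_ker, phi_apply] at this
  · intro x hxS hxP h0
    apply hv (some ⟨x, Finset.mem_sdiff.mpr ⟨hxS, hxP⟩⟩)
    simp only [q, Option.elim, Submodule.mem_comap, Submodule.subtype_apply,
      LinearMap.mem_ker, phi_apply]
    exact h0
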